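/- arXiv:2006.13574 — 3 statements merged into one kernel-verified Lean document; each statement's English description precedes it below -/
import Mathlib

section
/- Define in Sp₄(ℤ) the elements S₁ = X_{2α+β}, S₂ = X_{−(2α+β)}⁻¹, S₃ = X_β X_{α+β}⁻¹ X_{2α+β}, S₄ = X_{−β}⁻¹, S₅ = X_β. Then S₁,…,S₅ satisfy the braid relations of B₆: S_i S_j = S_j S_i whenever |i−j| > 1, and S_i S_j S_i = S_j S_i S_j whenever |i−j| = 1. -/
open Matrix

def Xa : Matrix (Fin 4) (Fin 4) ℤ := !![1,1,0,0; 0,1,0,0; 0,0,1,0; 0,0,-1,1]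
def Xb : Matrix (Fin 4) (Fin 4) ℤ := !![1,0,0,0; 0,1,0,1; 0,0,1,0; 0,0,0,1]
def Xab : Matrix (Fin 4) (Fin 4) ℤ := !![1,0,0,1; 0,1,1,0; 0,0,1,0; 0,0,0,1]
def X2ab : Matrix (Fin 4) (Fin 4) ℤ := !![1,0,1,0; 0,1,0,0; 0,0,1,0; 0,0,0,1]

noncomputable def S : Fin 5 → Matrix (Fin 4) (Fin 4) ℤ :=
  ![X2ab, (X2abᵀ)⁻¹, Xb * Xab⁻¹ * X2ab, (Xbᵀ)⁻¹, Xb]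

def T : Fin 5 → Matrix (Fin 4) (Fin 4) ℤ :=
  ![X2ab, !![1,0,0,0; 0,1,0,0; -1,0,1,0; 0,0,0,1],
    Xb * !![1,0,0,-1; 0,1,-1,0; 0,0,1,0; 0,0,0,1] * X2ab,
    !![1,0,0,0; 0,1,0,0; 0,0,1,0; 0,-1,0,1], Xb]

lemma hXab : Xab⁻¹ = !![1,0,0,-1; 0,1,-1,0; 0,0,1,0; 0,0,0,1] := by
  apply inv_eq_left_inv; decide

lemma hX2abT : (X2abᵀ)⁻¹ = !![1,0,0,0; 0,1,0,0; -1,0,1,0; 0,0,0,1] := by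
  apply inv_eq_left_inv; decide

lemma hXbT : (Xbᵀ)⁻¹ = !![1,0,0,0; 0,1,0,0; 0,0,1,0; 0,-1,0,1] := by
  apply inv_eq_left_inv; decide

lemma hST : S = T := by
  funext i
  fin_cases i <;> simp [S, T, hXab, hX2abT, hXbT]

set_option maxHeartbeats 1000000 in
theorem stmt9 :
    (∀ i j : Fin 5, ((i : ℕ) + 1 < (j : ℕ) ∨ (j : ℕ) + 1 < (i : ℕ)) →
      S i * S j = S j * S i) ∧
    (∀ i j : Fin 5, ((j : ℕ) = (i : ℕ) + 1 ∨ (i : ℕ) = (j : ℕ) + 1) →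
      S i * S j * S i = S j * S i * S j) := by
  rw [hST]
  decide
end

section
/- In the braid group B₆ (on generators σ₁,…,σ₅ with the standard braid relations), the equality σ₂⁻¹ σ₅σ₄σ₁σ₃⁻¹σ₅ σ₄⁻¹σ₅⁻¹σ₂σ₅σ₄ σ₁⁻¹σ₃σ₅⁻¹ σ₄⁻¹σ₅⁻¹σ₁σ₂σ₅σ₄ σ₁σ₃⁻¹σ₅ σ₄⁻¹σ₅⁻¹σ₂⁻¹σ₁⁻¹σ₄⁻¹ = 1 holds. -/
/-!
Conjugation by `g = σ₄σ₃` fixes `σ₀` and `σ₁` and sends `σ₄` to `σ₃`, so `v = g σ₂ g⁻¹` braids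
with `σ₁` and commutes with `σ₀` and `σ₃`. The braid relation between `σ₃` and `σ₄` rewrites the
word in the letters `σ₀, σ₁, σ₃, v`; there `σ₃` commutes with everything and cancels, and the rest
collapses by the braid relations `σ₀σ₁σ₀ = σ₁σ₀σ₁` and `σ₁vσ₁ = vσ₁v`.
-/

def braidRels : Set (FreeGroup (Fin 5)) :=
  {r | ∃ i j : Fin 5,
      ((i : ℕ) + 1 < (j : ℕ) ∧
        r = FreeGroup.of i * FreeGroup.of j * (FreeGroup.of i)⁻¹ * (FreeGroup.of j)⁻¹) ∨
      ((j : ℕ) = (i : ℕ) + 1 ∧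
        r = FreeGroup.of i * FreeGroup.of j * FreeGroup.of i *
            (FreeGroup.of j * FreeGroup.of i * FreeGroup.of j)⁻¹)}

abbrev B6 := PresentedGroup braidRels

def σ (i : Fin 5) : B6 := PresentedGroup.of i

section BraidWords

variable {G : Type*} [Group G]

theorem reduced_word_eq_one {a b v d : G} (hab : a * b * a = b * a * b)
    (hbv : b * v * b = v * b * v) (hav : Commute a v) (had : Commute a d)
    (hbd : Commute b d) (hvd : Commute v d) :
    b⁻¹ * (a * v⁻¹ * d) * b * (a⁻¹ * v * d⁻¹) * (a * b) * (a * v⁻¹ * d) *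
      b⁻¹ * a⁻¹ * d⁻¹ = 1 := by
  have hd₁ : d * (b * (a⁻¹ * v)) * d⁻¹ = b * (a⁻¹ * v) :=
    (hbd.symm.mul_right (had.symm.inv_right.mul_right hvd.symm)).mul_inv_cancel
  have hd₂ : d * (b⁻¹ * a⁻¹) * d⁻¹ = b⁻¹ * a⁻¹ :=
    (hbd.symm.inv_right.mul_right had.symm.inv_right).mul_inv_cancel
  calc _ = b⁻¹ * a * v⁻¹ * (d * (b * (a⁻¹ * v)) * d⁻¹) * a * b * a * v⁻¹ *
        (d * (b⁻¹ * a⁻¹) * d⁻¹) := by group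
    _ = b⁻¹ * a * v⁻¹ * b * (a⁻¹ * v * a) * b * a * v⁻¹ * b⁻¹ * a⁻¹ := by
        rw [hd₁, hd₂]; group
    _ = b⁻¹ * a * (v⁻¹ * (b * v * b)) * a * v⁻¹ * b⁻¹ * a⁻¹ := by
        rw [hav.inv_mul_cancel]; group
    _ = b⁻¹ * (a * b) * (v * a * v⁻¹) * b⁻¹ * a⁻¹ := by rw [hbv]; group
    _ = b⁻¹ * (a * b * a) * b⁻¹ * a⁻¹ := by rw [hav.symm.mul_inv_cancel]; group
    _ = 1 := by rw [hab]; group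

theorem braid_word_eq_one {a b c d e : G} (hab : a * b * a = b * a * b)
    (hbc : b * c * b = c * b * c) (hde : d * e * d = e * d * e) (hac : Commute a c)
    (had : Commute a d) (hae : Commute a e) (hbd : Commute b d) (hbe : Commute b e)
    (hce : Commute c e) :
    b⁻¹ * e * d * a * c⁻¹ * e * d⁻¹ * e⁻¹ * b * e * d * a⁻¹ * c * e⁻¹ * d⁻¹ * e⁻¹ *
      a * b * e * d * a * c⁻¹ * e * d⁻¹ * e⁻¹ * b⁻¹ * a⁻¹ * d⁻¹ = 1 := by
  set φ := MulAut.conj (e * d)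
  have hφa : φ a = a := (hae.mul_right had).symm.mul_inv_cancel
  have hφb : φ b = b := (hbe.mul_right hbd).symm.mul_inv_cancel
  have hφe : φ e = d :=
    calc φ e = (e * d * e) * d⁻¹ * e⁻¹ := by rw [MulAut.conj_apply]; group
      _ = d := by rw [← hde]; group
  have hbv : b * φ c * b = φ c * b * φ c := by
    simpa only [map_mul, hφb] using congrArg φ hbc
  have hav : Commute a (φ c) := hφa ▸ hac.map φ
  have hvd : Commute (φ c) d := hφe ▸ hce.map φ
  have hde_conj : e * d⁻¹ * e⁻¹ = (e * d)⁻¹ * d :=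
    calc e * d⁻¹ * e⁻¹ = (e * d)⁻¹ * (e * d * e) * d⁻¹ * e⁻¹ := by group
      _ = (e * d)⁻¹ * d := by rw [← hde]; group
  have hde_inv : e⁻¹ * d⁻¹ * e⁻¹ = (e * d)⁻¹ * d⁻¹ :=
    calc e⁻¹ * d⁻¹ * e⁻¹ = (e * d * e)⁻¹ := by group
      _ = (e * d)⁻¹ * d⁻¹ := by rw [← hde]; group
  calc _ = b⁻¹ * e * d * a * c⁻¹ * (e * d⁻¹ * e⁻¹) * b * e * d * a⁻¹ * c *
        (e⁻¹ * d⁻¹ * e⁻¹) * a * b * e * d * a * c⁻¹ * (e * d⁻¹ * e⁻¹) * b⁻¹ * a⁻¹ * d⁻¹ := by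
        simp only [mul_assoc]
    _ = b⁻¹ * (φ (a * c⁻¹) * d) * b * (φ (a⁻¹ * c) * d⁻¹) * (a * b) *
        (φ (a * c⁻¹) * d) * b⁻¹ * a⁻¹ * d⁻¹ := by
        rw [hde_conj, hde_inv]; simp only [φ, MulAut.conj_apply]; group
    _ = b⁻¹ * (a * (φ c)⁻¹ * d) * b * (a⁻¹ * φ c * d⁻¹) * (a * b) *
        (a * (φ c)⁻¹ * d) * b⁻¹ * a⁻¹ * d⁻¹ := by simp only [map_mul, map_inv, hφa]
    _ = 1 := reduced_word_eq_one hab hbv hav had hbd hvd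

end BraidWords

theorem σ_commute {i j : Fin 5} (h : (i : ℕ) + 1 < (j : ℕ)) : Commute (σ i) (σ j) :=
  PresentedGroup.mk_eq_mk_of_mul_inv_mem (x := FreeGroup.of i * FreeGroup.of j)
    (y := FreeGroup.of j * FreeGroup.of i) ⟨i, j, .inl ⟨h, by group⟩⟩

theorem σ_braid {i j : Fin 5} (h : (j : ℕ) = (i : ℕ) + 1) :
    σ i * σ j * σ i = σ j * σ i * σ j :=
  PresentedGroup.mk_eq_mk_of_mul_inv_mem ⟨i, j, .inr ⟨h, rfl⟩⟩

theorem stmt14 :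
    (σ 1)⁻¹ * σ 4 * σ 3 * σ 0 * (σ 2)⁻¹ * σ 4 *
    (σ 3)⁻¹ * (σ 4)⁻¹ * σ 1 * σ 4 * σ 3 *
    (σ 0)⁻¹ * σ 2 * (σ 4)⁻¹ *
    (σ 3)⁻¹ * (σ 4)⁻¹ * σ 0 * σ 1 * σ 4 * σ 3 *
    σ 0 * (σ 2)⁻¹ * σ 4 *
    (σ 3)⁻¹ * (σ 4)⁻¹ * (σ 1)⁻¹ * (σ 0)⁻¹ * (σ 3)⁻¹ = 1 :=
  braid_word_eq_one (σ_braid rfl) (σ_braid rfl) (σ_braid rfl) (σ_commute (by decide))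
    (σ_commute (by decide)) (σ_commute (by decide)) (σ_commute (by decide))
    (σ_commute (by decide)) (σ_commute (by decide))
end

section
/- There exists a group homomorphism f : B₆ → Sp₄(ℤ) with f(σ₁) = X_{2α+β}, f(σ₂) = X_{−(2α+β)}⁻¹, f(σ₃) = X_β X_{α+β}⁻¹ X_{2α+β}, f(σ₄) = X_{−β}⁻¹, f(σ₅) = X_β, and this homomorphism satisfies f((σ₁σ₂σ₁)¹²) = f(Δ²), where Δ is the half-twist of B₆. -/
open Matrix

def Δ : B6 :=
  (σ 0 * σ 1 * σ 2 * σ 3 * σ 4) * (σ 0 * σ 1 * σ 2 * σ 3) *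
  (σ 0 * σ 1 * σ 2) * (σ 0 * σ 1) * σ 0

def mkGL (A B : Matrix (Fin 4) (Fin 4) ℤ) (h1 : A * B = 1) (h2 : B * A = 1) :
    GL (Fin 4) ℤ := ⟨A, B, h1, h2⟩

def M : Fin 5 → GL (Fin 4) ℤ
  | 0 => mkGL !![1,0,1,0; 0,1,0,0; 0,0,1,0; 0,0,0,1]
              !![1,0,-1,0; 0,1,0,0; 0,0,1,0; 0,0,0,1] (by decide) (by decide)
  | 1 => mkGL !![1,0,0,0; 0,1,0,0; -1,0,1,0; 0,0,0,1]
              !![1,0,0,0; 0,1,0,0; 1,0,1,0; 0,0,0,1] (by decide) (by decide)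
  | 2 => mkGL !![1,0,1,-1; 0,1,-1,1; 0,0,1,0; 0,0,0,1]
              !![1,0,-1,1; 0,1,1,-1; 0,0,1,0; 0,0,0,1] (by decide) (by decide)
  | 3 => mkGL !![1,0,0,0; 0,1,0,0; 0,0,1,0; 0,-1,0,1]
              !![1,0,0,0; 0,1,0,0; 0,0,1,0; 0,1,0,1] (by decide) (by decide)
  | 4 => mkGL !![1,0,0,0; 0,1,0,1; 0,0,1,0; 0,0,0,1]
              !![1,0,0,0; 0,1,0,-1; 0,0,1,0; 0,0,0,1] (by decide) (by decide)

lemma Mrels : ∀ r ∈ braidRels, FreeGroup.lift M r = 1 := by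
  rintro r ⟨i, j, ⟨hij, rfl⟩ | ⟨hij, rfl⟩⟩ <;>
    simp only [_root_.map_mul, _root_.map_inv, FreeGroup.lift_apply_of] <;>
    fin_cases i <;> fin_cases j <;> simp_all <;>
    (apply Units.ext; decide)

noncomputable def f : B6 →* GL (Fin 4) ℤ := PresentedGroup.toGroup Mrels

theorem stmt19 :
    ∃ f : B6 →* GL (Fin 4) ℤ,
      ((f (σ 0) : Matrix (Fin 4) (Fin 4) ℤ) = X2ab) ∧
      ((f (σ 1) : Matrix (Fin 4) (Fin 4) ℤ) = (X2abᵀ)⁻¹) ∧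
      ((f (σ 2) : Matrix (Fin 4) (Fin 4) ℤ) = Xb * Xab⁻¹ * X2ab) ∧
      ((f (σ 3) : Matrix (Fin 4) (Fin 4) ℤ) = (Xbᵀ)⁻¹) ∧
      ((f (σ 4) : Matrix (Fin 4) (Fin 4) ℤ) = Xb) ∧
      f ((σ 0 * σ 1 * σ 0) ^ 12) = f (Δ ^ 2) := by
  refine ⟨f, ?_, ?_, ?_, ?_, ?_, ?_⟩
  · show ((PresentedGroup.toGroup Mrels) (PresentedGroup.of 0) : Matrix (Fin 4) (Fin 4) ℤ) = _
    rw [PresentedGroup.toGroup.of]; rfl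
  · show ((PresentedGroup.toGroup Mrels) (PresentedGroup.of 1) : Matrix (Fin 4) (Fin 4) ℤ) = _
    rw [PresentedGroup.toGroup.of]
    have h : X2abᵀ * !![1,0,0,0; 0,1,0,0; -1,0,1,0; 0,0,0,1] = 1 := by decide
    rw [Matrix.inv_eq_right_inv h]; rfl
  · show ((PresentedGroup.toGroup Mrels) (PresentedGroup.of 2) : Matrix (Fin 4) (Fin 4) ℤ) = _
    rw [PresentedGroup.toGroup.of]
    have h : Xab * !![1,0,0,-1; 0,1,-1,0; 0,0,1,0; 0,0,0,1] = 1 := by decide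
    rw [Matrix.inv_eq_right_inv h]
    show _ = Xb * _ * X2ab
    decide
  · show ((PresentedGroup.toGroup Mrels) (PresentedGroup.of 3) : Matrix (Fin 4) (Fin 4) ℤ) = _
    rw [PresentedGroup.toGroup.of]
    have h : Xbᵀ * !![1,0,0,0; 0,1,0,0; 0,0,1,0; 0,-1,0,1] = 1 := by decide
    rw [Matrix.inv_eq_right_inv h]; rfl
  · show ((PresentedGroup.toGroup Mrels) (PresentedGroup.of 4) : Matrix (Fin 4) (Fin 4) ℤ) = _
    rw [PresentedGroup.toGroup.of]; rfl
  · have key : ∀ g : B6, f g = f g := fun _ => rfl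
    show f _ = f _
    simp only [σ, Δ, _root_.map_mul, _root_.map_pow, f, PresentedGroup.toGroup.of]
    apply Units.ext
    decide
end
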